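/- The half-products ≺ and ≻ on WQSym_+ satisfy the dendriform axioms: for all x, y, z ∈ WQSym_+, (x ≺ y) ≺ z = x ≺ (y ≺ z + y ≻ z), (x ≻ y) ≺ z = x ≻ (y ≺ z), and (x ≺ y + x ≻ y) ≻ z = x ≻ (y ≻ z). In particular the product x·y := x ≺ y + x ≻ y is associative. -/
import Mathlib


open scoped TensorProduct Classical

/-- The maximum letter of a word, with `wmax [] = 0`. -/
def wmax (w : List ℕ) : ℕ := w.foldr max 0

/-- A word over the positive integers is packed if every letter from `1` to its maximum
occurs in it. -/
def IsPacked (w : List ℕ) : Prop :=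
  (∀ x ∈ w, 0 < x) ∧ ∀ i : ℕ, 0 < i → i ≤ wmax w → i ∈ w

/-- Shift every letter of `w` by `m`. -/
def shiftW (m : ℕ) (w : List ℕ) : List ℕ := w.map (· + m)

/-- The ambient free `ℚ`-vector space on all words. -/
abbrev V : Type := List ℕ →₀ ℚ

/-- The basis element `R_w`. -/
noncomputable def Rw (w : List ℕ) : V := Finsupp.single w 1

/-- `WQSym₊`: the span of the `R_w` over nonempty packed words `w`. -/
noncomputable def Wplus : Submodule ℚ V :=
  Submodule.span ℚ {x : V | ∃ w : List ℕ, IsPacked w ∧ w ≠ [] ∧ x = Rw w}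

/-- The list of all shuffles of two words (with multiplicity). -/
def shuf : List ℕ → List ℕ → List (List ℕ)
  | [], v => [v]
  | u, [] => [u]
  | a :: u, b :: v => (shuf u (b :: v)).map (a :: ·) ++ (shuf (a :: u) v).map (b :: ·)
termination_by u v => u.length + v.length

/-- The left half-shuffle `ua ≺ vb := (u ⧢ vb)·a` (as a list of words). -/
def halfShL (u v : List ℕ) : List (List ℕ) :=
  (shuf u.dropLast v).map (fun w => w ++ [u.getLastD 0])

/-- The right half-shuffle `ua ≻ vb := (ua ⧢ v)·b` (as a list of words). -/
def halfShR (u v : List ℕ) : List (List ℕ) :=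
  (shuf u v.dropLast).map (fun w => w ++ [v.getLastD 0])

/-- The formal sum of a list of words in `V`. -/
noncomputable def rsum (l : List (List ℕ)) : V := (l.map Rw).sum

/-- The half-product `≺` on `WQSym₊`: `R_u ≺ R_v = Σ_{w ∈ u ≺ v[u]} R_w`. -/
noncomputable def mulL : V →ₗ[ℚ] V →ₗ[ℚ] V :=
  Finsupp.lsum ℚ fun u => LinearMap.toSpanSingleton ℚ (V →ₗ[ℚ] V)
    (Finsupp.lsum ℚ fun v =>
      LinearMap.toSpanSingleton ℚ V (rsum (halfShL u (shiftW (wmax u) v))))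

/-- The half-product `≻` on `WQSym₊`: `R_u ≻ R_v = Σ_{w ∈ u ≻ v[u]} R_w`. -/
noncomputable def mulR : V →ₗ[ℚ] V →ₗ[ℚ] V :=
  Finsupp.lsum ℚ fun u => LinearMap.toSpanSingleton ℚ (V →ₗ[ℚ] V)
    (Finsupp.lsum ℚ fun v =>
      LinearMap.toSpanSingleton ℚ V (rsum (halfShR u (shiftW (wmax u) v))))


section Dendriform

lemma shuf_nil_left (v : List ℕ) : shuf [] v = [v] := by
  cases v <;> simp [shuf]

lemma shuf_nil_right (u : List ℕ) : shuf u [] = [u] := by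
  cases u <;> simp [shuf]

lemma shuf_cons_cons (a b : ℕ) (u v : List ℕ) :
    shuf (a :: u) (b :: v) = (shuf u (b :: v)).map (a :: ·) ++ (shuf (a :: u) v).map (b :: ·) := by
  rw [shuf]


def msh (a b : List ℕ) : Multiset (List ℕ) := (shuf a b : List (List ℕ))

lemma msh_nil_left (v : List ℕ) : msh [] v = {v} := by simp [msh, shuf_nil_left]
lemma msh_nil_right (u : List ℕ) : msh u [] = {u} := by simp [msh, shuf_nil_right]
lemma msh_cons_cons (a b : ℕ) (u v : List ℕ) :
    msh (a :: u) (b :: v) = (msh u (b :: v)).map (a :: ·) + (msh (a :: u) v).map (b :: ·) := by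
  simp [msh, shuf_cons_cons]

lemma bind_id (s : Multiset (List ℕ)) : (s.bind fun t => {t}) = s :=
  (Multiset.bind_singleton s id).trans (Multiset.map_id s)

lemma expandL (x y z : ℕ) (a' b' c' : List ℕ) :
    (msh (x :: a') (y :: b')).bind (fun t => msh t (z :: c')) =
      ((msh a' (y :: b')).bind (fun t => msh t (z :: c'))).map (x :: ·) +
      ((msh (x :: a') b').bind (fun t => msh t (z :: c'))).map (y :: ·) +
      ((msh (x :: a') (y :: b')).bind (fun t => msh t c')).map (z :: ·) := by
  rw [msh_cons_cons x y, Multiset.add_bind, Multiset.bind_map, Multiset.bind_map]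
  simp only [msh_cons_cons, Multiset.bind_add, ← Multiset.map_bind, Multiset.add_bind,
    Multiset.bind_map, Multiset.map_add]
  abel

lemma expandR (x y z : ℕ) (a' b' c' : List ℕ) :
    (msh (y :: b') (z :: c')).bind (fun t => msh (x :: a') t) =
      ((msh (y :: b') (z :: c')).bind (fun t => msh a' t)).map (x :: ·) +
      ((msh b' (z :: c')).bind (fun t => msh (x :: a') t)).map (y :: ·) +
      ((msh (y :: b') c').bind (fun t => msh (x :: a') t)).map (z :: ·) := by
  rw [msh_cons_cons y z, Multiset.add_bind, Multiset.bind_map, Multiset.bind_map]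
  simp only [msh_cons_cons, Multiset.bind_add, ← Multiset.map_bind, Multiset.add_bind,
    Multiset.bind_map, Multiset.map_add]
  abel

lemma msh_assoc_aux : ∀ n, ∀ a b c : List ℕ, a.length + b.length + c.length ≤ n →
    (msh a b).bind (fun t => msh t c) = (msh b c).bind (fun t => msh a t) := by
  intro n
  induction n with
  | zero =>
    intro a b c h
    have ha : a = [] := by cases a <;> simp_all
    subst ha
    simp [msh_nil_left, bind_id]
  | succ n ih =>
    intro a b c h
    match a, b, c with
    | [], b, c => simp [msh_nil_left, bind_id]
    | x :: a', [], c => simp [msh_nil_left, msh_nil_right]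
    | x :: a', y :: b', [] => simp [msh_nil_right, bind_id]
    | x :: a', y :: b', z :: c' =>
      have h1 : a'.length + (y :: b').length + (z :: c').length ≤ n := by
        simp at h ⊢; omega
      have h2 : (x :: a').length + b'.length + (z :: c').length ≤ n := by
        simp at h ⊢; omega
      have h3 : (x :: a').length + (y :: b').length + c'.length ≤ n := by
        simp at h ⊢; omega
      rw [expandL, expandR, ih _ _ _ h1, ih _ _ _ h2, ih _ _ _ h3]

lemma msh_assoc (a b c : List ℕ) :
    (msh a b).bind (fun t => msh t c) = (msh b c).bind (fun t => msh a t) :=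
  msh_assoc_aux (a.length + b.length + c.length) a b c le_rfl


lemma msh_BR1 (x y : ℕ) : ∀ v : List ℕ,
    msh [x] (v ++ [y]) = (msh [] (v ++ [y])).map (· ++ [x]) + (msh [x] v).map (· ++ [y]) := by
  intro v
  induction v with
  | nil =>
    simp only [msh_cons_cons, msh_nil_left, msh_nil_right, List.nil_append,
      Multiset.map_singleton, Multiset.map_add, List.singleton_append, List.cons_append]
    abel
  | cons b v₀ ih =>
    rw [List.cons_append, msh_cons_cons, msh_nil_left, ih]
    simp only [msh_nil_left, msh_cons_cons, msh_nil_right, Multiset.map_add,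
      Multiset.map_map, Multiset.map_singleton, Function.comp_def, List.cons_append,
      List.nil_append, List.append_assoc, List.singleton_append]
    abel

lemma msh_BR2 (x y : ℕ) : ∀ u : List ℕ,
    msh (u ++ [x]) [y] = (msh u [y]).map (· ++ [x]) + (msh (u ++ [x]) []).map (· ++ [y]) := by
  intro u
  induction u with
  | nil =>
    simp only [msh_cons_cons, msh_nil_left, msh_nil_right, List.nil_append,
      Multiset.map_singleton, Multiset.map_add, List.singleton_append, List.cons_append]
    abel
  | cons a u₀ ih =>
    rw [List.cons_append, msh_cons_cons, msh_nil_right, ih]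
    simp only [msh_nil_left, msh_cons_cons, msh_nil_right, Multiset.map_add,
      Multiset.map_map, Multiset.map_singleton, Function.comp_def, List.cons_append,
      List.nil_append, List.append_assoc, List.singleton_append]
    abel

lemma msh_BR_aux : ∀ n, ∀ (u v : List ℕ) (x y : ℕ), u.length + v.length ≤ n →
    msh (u ++ [x]) (v ++ [y]) =
      (msh u (v ++ [y])).map (· ++ [x]) + (msh (u ++ [x]) v).map (· ++ [y]) := by
  intro n
  induction n with
  | zero =>
    intro u v x y h
    have hu : u = [] := by cases u <;> simp_all
    subst hu
    exact msh_BR1 x y v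
  | succ n ih =>
    intro u v x y h
    match u, v with
    | [], v => exact msh_BR1 x y v
    | a :: u₀, [] => exact msh_BR2 x y (a :: u₀)
    | a :: u₀, b :: v₀ =>
      have h1 : u₀.length + (b :: v₀).length ≤ n := by simp at h ⊢; omega
      have h2 : (a :: u₀).length + v₀.length ≤ n := by simp at h ⊢; omega
      have I1 := ih u₀ (b :: v₀) x y h1
      have I2 := ih (a :: u₀) v₀ x y h2
      simp only [List.cons_append] at I1 I2 ⊢
      simp only [msh_cons_cons]
      rw [I1, I2]
      simp only [Multiset.map_add, Multiset.map_map, Function.comp_def, List.cons_append]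
      abel

lemma msh_BR (u v : List ℕ) (x y : ℕ) :
    msh (u ++ [x]) (v ++ [y]) =
      (msh u (v ++ [y])).map (· ++ [x]) + (msh (u ++ [x]) v).map (· ++ [y]) :=
  msh_BR_aux (u.length + v.length) u v x y le_rfl

lemma wmax_nil : wmax [] = 0 := rfl
lemma wmax_cons (x : ℕ) (t : List ℕ) : wmax (x :: t) = max x (wmax t) := rfl

lemma wmax_append (a b : List ℕ) : wmax (a ++ b) = max (wmax a) (wmax b) := by
  induction a with
  | nil => simp [wmax_nil, wmax_cons]
  | cons x t ih => simp [wmax_cons, ih, max_assoc]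

lemma shiftW_nil (m : ℕ) : shiftW m [] = [] := rfl
lemma shiftW_cons (m x : ℕ) (t : List ℕ) : shiftW m (x :: t) = (x + m) :: shiftW m t := rfl
lemma shiftW_append (m : ℕ) (a b : List ℕ) : shiftW m (a ++ b) = shiftW m a ++ shiftW m b := by
  simp [shiftW]
lemma shiftW_shiftW (k m : ℕ) (w : List ℕ) : shiftW m (shiftW k w) = shiftW (k + m) w := by
  simp [shiftW, Function.comp_def, add_assoc]
lemma shiftW_ne_nil (m : ℕ) {w : List ℕ} (h : w ≠ []) : shiftW m w ≠ [] := by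
  cases w <;> simp_all [shiftW]

lemma eq_dropLast_concat {v : List ℕ} (h : v ≠ []) : v.dropLast ++ [v.getLastD 0] = v := by
  rcases List.eq_nil_or_concat v with rfl | ⟨l, a, rfl⟩
  · exact absurd rfl h
  · simp

lemma wmax_shift {v : List ℕ} (m : ℕ) (h : v ≠ []) : wmax (shiftW m v) = wmax v + m := by
  induction v with
  | nil => exact absurd rfl h
  | cons x t ih =>
    cases t with
    | nil => simp [shiftW, wmax_cons, wmax_nil]
    | cons y s =>
      rw [shiftW_cons, wmax_cons, wmax_cons, ih (by simp)]
      omega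

lemma dropLast_shiftW (m : ℕ) (w : List ℕ) : (shiftW m w).dropLast = shiftW m w.dropLast := by
  rcases List.eq_nil_or_concat w with rfl | ⟨l, a, rfl⟩
  · rfl
  · simp [shiftW_append, shiftW]

lemma getLastD_shiftW (m : ℕ) {w : List ℕ} (h : w ≠ []) :
    (shiftW m w).getLastD 0 = w.getLastD 0 + m := by
  rcases List.eq_nil_or_concat w with rfl | ⟨l, a, rfl⟩
  · exact absurd rfl h
  · simp [shiftW_append, shiftW]


lemma wmax_shuf_aux : ∀ n, ∀ a b : List ℕ, a.length + b.length ≤ n →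
    ∀ w ∈ shuf a b, wmax w = max (wmax a) (wmax b) := by
  intro n
  induction n with
  | zero =>
    intro a b h w hw
    have ha : a = [] := by cases a <;> simp_all
    have hb : b = [] := by cases b <;> simp_all
    subst ha; subst hb
    simp [shuf_nil_left] at hw
    simp [hw]
  | succ n ih =>
    intro a b h w hw
    match a, b with
    | [], b =>
      simp [shuf_nil_left] at hw
      simp [hw, wmax_nil]
    | x :: a', [] =>
      simp [shuf_nil_right] at hw
      simp [hw, wmax_nil]
    | x :: a', y :: b' =>
      rw [shuf_cons_cons] at hw
      rcases List.mem_append.mp hw with hw | hw <;>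
        obtain ⟨t, ht, rfl⟩ := List.mem_map.mp hw
      · have h1 : a'.length + (y :: b').length ≤ n := by simp at h ⊢; omega
        rw [wmax_cons, ih a' (y :: b') h1 t ht]
        simp only [wmax_cons]
        omega
      · have h2 : (x :: a').length + b'.length ≤ n := by simp at h ⊢; omega
        rw [wmax_cons, ih (x :: a') b' h2 t ht]
        simp only [wmax_cons]
        omega

lemma wmax_mem_msh {a b w : List ℕ} (hw : w ∈ msh a b) :
    wmax w = max (wmax a) (wmax b) :=
  wmax_shuf_aux (a.length + b.length) a b le_rfl w hw

lemma msh_shift_aux (k : ℕ) : ∀ n, ∀ a b : List ℕ, a.length + b.length ≤ n →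
    msh (shiftW k a) (shiftW k b) = (msh a b).map (shiftW k) := by
  intro n
  induction n with
  | zero =>
    intro a b h
    have ha : a = [] := by cases a <;> simp_all
    subst ha
    simp [shiftW_nil, msh_nil_left]
  | succ n ih =>
    intro a b h
    match a, b with
    | [], b => simp [shiftW_nil, msh_nil_left]
    | x :: a', [] => simp [shiftW_nil, msh_nil_right]
    | x :: a', y :: b' =>
      have h1 : a'.length + (y :: b').length ≤ n := by simp at h ⊢; omega
      have h2 : (x :: a').length + b'.length ≤ n := by simp at h ⊢; omega
      rw [shiftW_cons, shiftW_cons, msh_cons_cons, msh_cons_cons,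
        ← shiftW_cons k y b', ← shiftW_cons k x a', ih _ _ h1, ih _ _ h2]
      simp only [Multiset.map_map, Multiset.map_add, Function.comp_def, shiftW_cons]

lemma msh_shift (k : ℕ) (a b : List ℕ) :
    msh (shiftW k a) (shiftW k b) = (msh a b).map (shiftW k) :=
  msh_shift_aux k (a.length + b.length) a b le_rfl

noncomputable def rsumM (s : Multiset (List ℕ)) : V := (s.map Rw).sum

lemma rsum_eq_rsumM (l : List (List ℕ)) : rsum l = rsumM ↑l := by
  simp [rsum, rsumM]

lemma rsumM_zero : rsumM 0 = 0 := by simp [rsumM]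

lemma rsumM_add (s t : Multiset (List ℕ)) : rsumM (s + t) = rsumM s + rsumM t := by
  simp [rsumM]

lemma rsumM_cons (a : List ℕ) (s : Multiset (List ℕ)) :
    rsumM (a ::ₘ s) = Rw a + rsumM s := by
  simp [rsumM]

lemma mulL_Rw (u v : List ℕ) :
    mulL (Rw u) (Rw v) =
      rsumM ((msh u.dropLast (shiftW (wmax u) v)).map (· ++ [u.getLastD 0])) := by
  have h : mulL (Rw u) (Rw v) = rsum (halfShL u (shiftW (wmax u) v)) := by
    simp [mulL, Rw, Finsupp.lsum_single, LinearMap.toSpanSingleton_apply]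
  rw [h, rsum_eq_rsumM, halfShL]
  congr 1

lemma mulR_Rw (u v : List ℕ) :
    mulR (Rw u) (Rw v) =
      rsumM ((msh u ((shiftW (wmax u) v).dropLast)).map
        (· ++ [(shiftW (wmax u) v).getLastD 0])) := by
  have h : mulR (Rw u) (Rw v) = rsum (halfShR u (shiftW (wmax u) v)) := by
    simp [mulR, Rw, Finsupp.lsum_single, LinearMap.toSpanSingleton_apply]
  rw [h, rsum_eq_rsumM, halfShR]
  congr 1

lemma mulL_rsumM_left {S : Multiset (List ℕ)} {M : ℕ} (z : List ℕ)
    (hw : ∀ w ∈ S, wmax w = M) :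
    mulL (rsumM S) (Rw z) =
      rsumM (S.bind fun w => (msh w.dropLast (shiftW M z)).map (· ++ [w.getLastD 0])) := by
  induction S using Multiset.induction_on with
  | empty => simp [rsumM_zero]
  | cons a s ih =>
    rw [rsumM_cons, map_add, LinearMap.add_apply, Multiset.cons_bind, rsumM_add,
      ih (fun w h => hw w (Multiset.mem_cons_of_mem h)), mulL_Rw,
      hw a (Multiset.mem_cons_self a s)]

lemma mulR_rsumM_left {S : Multiset (List ℕ)} {M : ℕ} (z : List ℕ)
    (hw : ∀ w ∈ S, wmax w = M) :
    mulR (rsumM S) (Rw z) =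
      rsumM (S.bind fun w => (msh w ((shiftW M z).dropLast)).map
        (· ++ [(shiftW M z).getLastD 0])) := by
  induction S using Multiset.induction_on with
  | empty => simp [rsumM_zero]
  | cons a s ih =>
    rw [rsumM_cons, map_add, LinearMap.add_apply, Multiset.cons_bind, rsumM_add,
      ih (fun w h => hw w (Multiset.mem_cons_of_mem h)), mulR_Rw,
      hw a (Multiset.mem_cons_self a s)]

lemma mulL_rsumM_right (u : List ℕ) (S : Multiset (List ℕ)) :
    mulL (Rw u) (rsumM S) =
      rsumM (S.bind fun p =>
        (msh u.dropLast (shiftW (wmax u) p)).map (· ++ [u.getLastD 0])) := by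
  induction S using Multiset.induction_on with
  | empty => simp [rsumM_zero]
  | cons a s ih =>
    rw [rsumM_cons, map_add, Multiset.cons_bind, rsumM_add, ih, mulL_Rw]

lemma mulR_rsumM_right (u : List ℕ) (S : Multiset (List ℕ)) :
    mulR (Rw u) (rsumM S) =
      rsumM (S.bind fun p =>
        (msh u ((shiftW (wmax u) p).dropLast)).map
          (· ++ [(shiftW (wmax u) p).getLastD 0])) := by
  induction S using Multiset.induction_on with
  | empty => simp [rsumM_zero]
  | cons a s ih =>
    rw [rsumM_cons, map_add, Multiset.cons_bind, rsumM_add, ih, mulR_Rw]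

-- decomposition of a full shuffle into the two half-shuffles (last-letter form)
lemma msh_split {v w : List ℕ} (hv : v ≠ []) (hw : w ≠ []) :
    msh v w = (msh v.dropLast w).map (· ++ [v.getLastD 0]) +
      (msh v w.dropLast).map (· ++ [w.getLastD 0]) := by
  conv_lhs => rw [← eq_dropLast_concat hv, ← eq_dropLast_concat hw]
  rw [msh_BR, eq_dropLast_concat hv, eq_dropLast_concat hw]

lemma wmax_eq_of_ne {u : List ℕ} (hu : u ≠ []) :
    wmax u = max (wmax u.dropLast) (u.getLastD 0) := by
  conv_lhs => rw [← eq_dropLast_concat hu]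
  rw [wmax_append, wmax_cons, wmax_nil]
  omega

lemma hwA {u v : List ℕ} (hu : u ≠ []) (hv : v ≠ []) :
    ∀ w ∈ (msh u.dropLast (shiftW (wmax u) v)).map (· ++ [u.getLastD 0]),
      wmax w = wmax u + wmax v := by
  intro w hw
  obtain ⟨s, hs, rfl⟩ := Multiset.mem_map.mp hw
  rw [wmax_append, wmax_mem_msh hs, wmax_shift _ hv, wmax_cons, wmax_nil]
  have h1 := wmax_eq_of_ne hu
  omega

lemma ax1 {u v z : List ℕ} (hu : u ≠ []) (hv : v ≠ []) (hz : z ≠ []) :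
    mulL (mulL (Rw u) (Rw v)) (Rw z) =
      mulL (Rw u) (mulL (Rw v) (Rw z) + mulR (Rw v) (Rw z)) := by
  have hz₁ : shiftW (wmax v) z ≠ [] := shiftW_ne_nil _ hz
  rw [mulL_Rw u v, mulL_rsumM_left z (hwA hu hv),
    mulL_Rw v z, mulR_Rw v z, ← rsumM_add, ← msh_split hv hz₁, mulL_rsumM_right]
  congr 1
  rw [Multiset.bind_map]
  simp only [List.dropLast_concat, List.getLastD_concat]
  rw [← Multiset.map_bind]
  rw [show ((msh v (shiftW (wmax v) z)).bind fun p =>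
        (msh u.dropLast (shiftW (wmax u) p)).map (· ++ [u.getLastD 0])) =
      ((msh v (shiftW (wmax v) z)).map (shiftW (wmax u))).bind
        (fun q => (msh u.dropLast q).map (· ++ [u.getLastD 0])) by
      rw [Multiset.bind_map]]
  rw [← msh_shift, shiftW_shiftW, Nat.add_comm (wmax v) (wmax u), ← Multiset.map_bind]
  congr 1
  exact msh_assoc _ _ _

lemma hwB {u v : List ℕ} (hv : v ≠ []) :
    ∀ w ∈ (msh u ((shiftW (wmax u) v).dropLast)).map
        (· ++ [(shiftW (wmax u) v).getLastD 0]),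
      wmax w = wmax u + wmax v := by
  intro w hw
  obtain ⟨s, hs, rfl⟩ := Multiset.mem_map.mp hw
  have hv' : shiftW (wmax u) v ≠ [] := shiftW_ne_nil _ hv
  rw [wmax_append, wmax_mem_msh hs, wmax_cons, wmax_nil]
  have h1 := wmax_eq_of_ne hv'
  have h2 := wmax_shift (wmax u) hv
  omega

lemma hwC {u v : List ℕ} (hv : v ≠ []) :
    ∀ w ∈ msh u (shiftW (wmax u) v), wmax w = wmax u + wmax v := by
  intro w hw
  rw [wmax_mem_msh hw, wmax_shift _ hv]
  omega

lemma ax2 {u v z : List ℕ} (hu : u ≠ []) (hv : v ≠ []) (hz : z ≠ []) :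
    mulL (mulR (Rw u) (Rw v)) (Rw z) = mulR (Rw u) (mulL (Rw v) (Rw z)) := by
  rw [mulR_Rw u v, mulL_rsumM_left z (hwB hv), mulL_Rw v z, mulR_rsumM_right]
  congr 1
  rw [Multiset.bind_map, Multiset.bind_map]
  simp only [List.dropLast_concat, List.getLastD_concat, shiftW_append, shiftW_cons,
    shiftW_nil, getLastD_shiftW (wmax u) hv]
  simp only [← Multiset.map_bind]
  rw [show ((msh v.dropLast (shiftW (wmax v) z)).bind fun q =>
        msh u (shiftW (wmax u) q)) =
      ((msh v.dropLast (shiftW (wmax v) z)).map (shiftW (wmax u))).bind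
        (fun r => msh u r) by rw [Multiset.bind_map]]
  rw [← msh_shift, ← dropLast_shiftW, shiftW_shiftW, Nat.add_comm (wmax v) (wmax u)]
  congr 1
  exact msh_assoc _ _ _

lemma ax3 {u v z : List ℕ} (hu : u ≠ []) (hv : v ≠ []) (hz : z ≠ []) :
    mulR (mulL (Rw u) (Rw v) + mulR (Rw u) (Rw v)) (Rw z) =
      mulR (Rw u) (mulR (Rw v) (Rw z)) := by
  have hv' : shiftW (wmax u) v ≠ [] := shiftW_ne_nil _ hv
  rw [mulL_Rw u v, mulR_Rw u v, ← rsumM_add, ← msh_split hu hv',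
    mulR_rsumM_left z (hwC hv), mulR_Rw v z, mulR_rsumM_right]
  congr 1
  rw [Multiset.bind_map]
  simp only [shiftW_append, shiftW_cons, shiftW_nil, List.dropLast_concat,
    List.getLastD_concat, getLastD_shiftW (wmax v) hz, getLastD_shiftW (wmax u + wmax v) hz]
  simp only [← Multiset.map_bind, ← add_assoc]
  rw [show ((msh v ((shiftW (wmax v) z).dropLast)).bind fun q =>
        msh u (shiftW (wmax u) q)) =
      ((msh v ((shiftW (wmax v) z).dropLast)).map (shiftW (wmax u))).bind
        (fun r => msh u r) by rw [Multiset.bind_map]]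
  rw [← msh_shift, ← dropLast_shiftW, shiftW_shiftW, Nat.add_comm (wmax v) (wmax u),
    show z.getLastD 0 + wmax v + wmax u = z.getLastD 0 + wmax u + wmax v by omega]
  congr 1
  exact msh_assoc _ _ _

lemma mem_span' {y : V} (hy : y ∈ Wplus) :
    y ∈ Submodule.span ℚ {x : V | ∃ w : List ℕ, IsPacked w ∧ w ≠ [] ∧ x = Rw w} := hy

lemma ax3' {u v z : List ℕ} (hu : u ≠ []) (hv : v ≠ []) (hz : z ≠ []) :
    mulR (mulL (Rw u) (Rw v)) (Rw z) + mulR (mulR (Rw u) (Rw v)) (Rw z) =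
      mulR (Rw u) (mulR (Rw v) (Rw z)) := by
  have h := ax3 hu hv hz
  rwa [map_add, LinearMap.add_apply] at h


lemma eqn1 : ∀ x ∈ Wplus, ∀ y ∈ Wplus, ∀ z ∈ Wplus,
    mulL (mulL x y) z = mulL x (mulL y z + mulR y z) := by
  intro x hx
  induction mem_span' hx using Submodule.span_induction with
  | mem x hxs =>
    obtain ⟨u, hup, hune, rfl⟩ := hxs
    intro y hy
    induction mem_span' hy using Submodule.span_induction with
    | mem y hys =>
      obtain ⟨v, hvp, hvne, rfl⟩ := hys
      intro z hz
      induction mem_span' hz using Submodule.span_induction with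
      | mem z hzs =>
        obtain ⟨w, hwp, hwne, rfl⟩ := hzs
        exact ax1 hune hvne hwne
      | zero => simp
      | add a b ha hb iha ihb =>
        simp only [map_add, LinearMap.add_apply, iha ha, ihb hb]
        all_goals abel
      | smul r a ha iha =>
        simp only [map_add, map_smul, LinearMap.add_apply, LinearMap.smul_apply,
          iha ha, smul_add]
        all_goals abel
    | zero => intro z hz; simp
    | add a b ha hb iha ihb =>
      intro z hz
      simp only [map_add, LinearMap.add_apply, iha ha z hz, ihb hb z hz]
      all_goals abel
    | smul r a ha iha =>
      intro z hz
      simp only [map_add, map_smul, LinearMap.add_apply, LinearMap.smul_apply,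
        iha ha z hz, smul_add]
      all_goals abel
  | zero => intro y hy z hz; simp
  | add a b ha hb iha ihb =>
    intro y hy z hz
    simp only [map_add, LinearMap.add_apply, iha ha y hy z hz, ihb hb y hy z hz]
    all_goals abel
  | smul r a ha iha =>
    intro y hy z hz
    simp only [map_add, map_smul, LinearMap.add_apply, LinearMap.smul_apply,
      iha ha y hy z hz, smul_add]
    all_goals abel

lemma eqn2 : ∀ x ∈ Wplus, ∀ y ∈ Wplus, ∀ z ∈ Wplus,
    mulL (mulR x y) z = mulR x (mulL y z) := by
  intro x hx
  induction mem_span' hx using Submodule.span_induction with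
  | mem x hxs =>
    obtain ⟨u, hup, hune, rfl⟩ := hxs
    intro y hy
    induction mem_span' hy using Submodule.span_induction with
    | mem y hys =>
      obtain ⟨v, hvp, hvne, rfl⟩ := hys
      intro z hz
      induction mem_span' hz using Submodule.span_induction with
      | mem z hzs =>
        obtain ⟨w, hwp, hwne, rfl⟩ := hzs
        exact ax2 hune hvne hwne
      | zero => simp
      | add a b ha hb iha ihb =>
        simp only [map_add, LinearMap.add_apply, iha ha, ihb hb]
        all_goals abel
      | smul r a ha iha =>
        simp only [map_add, map_smul, LinearMap.add_apply, LinearMap.smul_apply,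
          iha ha, smul_add]
        all_goals abel
    | zero => intro z hz; simp
    | add a b ha hb iha ihb =>
      intro z hz
      simp only [map_add, LinearMap.add_apply, iha ha z hz, ihb hb z hz]
      all_goals abel
    | smul r a ha iha =>
      intro z hz
      simp only [map_add, map_smul, LinearMap.add_apply, LinearMap.smul_apply,
        iha ha z hz, smul_add]
      all_goals abel
  | zero => intro y hy z hz; simp
  | add a b ha hb iha ihb =>
    intro y hy z hz
    simp only [map_add, LinearMap.add_apply, iha ha y hy z hz, ihb hb y hy z hz]
    all_goals abel
  | smul r a ha iha =>
    intro y hy z hz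
    simp only [map_add, map_smul, LinearMap.add_apply, LinearMap.smul_apply,
      iha ha y hy z hz, smul_add]
    all_goals abel

lemma eqn3' : ∀ x ∈ Wplus, ∀ y ∈ Wplus, ∀ z ∈ Wplus,
    mulR (mulL x y) z + mulR (mulR x y) z = mulR x (mulR y z) := by
  intro x hx
  induction mem_span' hx using Submodule.span_induction with
  | mem x hxs =>
    obtain ⟨u, hup, hune, rfl⟩ := hxs
    intro y hy
    induction mem_span' hy using Submodule.span_induction with
    | mem y hys =>
      obtain ⟨v, hvp, hvne, rfl⟩ := hys
      intro z hz
      induction mem_span' hz using Submodule.span_induction with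
      | mem z hzs =>
        obtain ⟨w, hwp, hwne, rfl⟩ := hzs
        exact ax3' hune hvne hwne
      | zero => simp
      | add a b ha hb iha ihb =>
        simp only [map_add, LinearMap.add_apply, ← iha ha, ← ihb hb]
        all_goals abel
      | smul r a ha iha =>
        simp only [map_add, map_smul, LinearMap.add_apply, LinearMap.smul_apply,
          ← iha ha, smul_add]
        all_goals abel
    | zero => intro z hz; simp
    | add a b ha hb iha ihb =>
      intro z hz
      simp only [map_add, LinearMap.add_apply, ← iha ha z hz, ← ihb hb z hz]
      all_goals abel
    | smul r a ha iha =>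
      intro z hz
      simp only [map_add, map_smul, LinearMap.add_apply, LinearMap.smul_apply,
        ← iha ha z hz, smul_add]
      all_goals abel
  | zero => intro y hy z hz; simp
  | add a b ha hb iha ihb =>
    intro y hy z hz
    simp only [map_add, LinearMap.add_apply, ← iha ha y hy z hz, ← ihb hb y hy z hz]
    all_goals abel
  | smul r a ha iha =>
    intro y hy z hz
    simp only [map_add, map_smul, LinearMap.add_apply, LinearMap.smul_apply,
      ← iha ha y hy z hz, smul_add]
    all_goals abel

end Dendriform

theorem WQSym_dendriform :
    ∀ x ∈ Wplus, ∀ y ∈ Wplus, ∀ z ∈ Wplus,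
      mulL (mulL x y) z = mulL x (mulL y z + mulR y z) ∧
      mulL (mulR x y) z = mulR x (mulL y z) ∧
      mulR (mulL x y + mulR x y) z = mulR x (mulR y z) ∧
      (mulL (mulL x y + mulR x y) z + mulR (mulL x y + mulR x y) z =
        mulL x (mulL y z + mulR y z) + mulR x (mulL y z + mulR y z)) := by
  intro x hx y hy z hz
  have h1 := eqn1 x hx y hy z hz
  have h2 := eqn2 x hx y hy z hz
  have h3' := eqn3' x hx y hy z hz
  have h3 : mulR (mulL x y + mulR x y) z = mulR x (mulR y z) := by
    rw [map_add, LinearMap.add_apply, h3']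
  refine ⟨h1, h2, h3, ?_⟩
  conv_lhs => rw [map_add, LinearMap.add_apply, h1, h2, h3]
  rw [map_add (mulR x) (mulL y z) (mulR y z)]
  abel
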